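/- In G_inv, for any y with 0 < y < 1/2 and fresh variable p: Γ ⊨^{[y,1]} χ (entailment induced by filter [y,1]) holds if and only if Γ^{↓!} ⊨^≤ Δ(p → χ), where Γ^{↓!} = {Δ(p → φ) : φ ∈ Γ} ∪ {∼Δ(∼ᵢp → p)} and ⊨^≤ is order-entailment. -/
import Mathlib


noncomputable def gimp (a b : ℝ) : ℝ := if a ≤ b then 1 else b
noncomputable def gcoimp (a b : ℝ) : ℝ := if a ≤ b then 0 else a
noncomputable def gneg (a : ℝ) : ℝ := if a = 0 then 1 else 0
noncomputable def gdelta (a : ℝ) : ℝ := if a = 1 then 1 else 0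

/-- Formulas of Gödel logic with involutive negation. -/
inductive IForm : Type
  | var : ℕ → IForm
  | bot : IForm
  | top : IForm
  | and : IForm → IForm → IForm
  | or : IForm → IForm → IForm
  | imp : IForm → IForm → IForm
  | coimp : IForm → IForm → IForm
  | wneg : IForm → IForm
  | delta : IForm → IForm
  | inv : IForm → IForm

/-- Evaluation of `G_inv` formulas in `[0,1]`. -/
noncomputable def ieval (v : ℕ → ℝ) : IForm → ℝ
  | .var n => v n
  | .bot => 0
  | .top => 1
  | .and φ χ => min (ieval v φ) (ieval v χ)
  | .or φ χ => max (ieval v φ) (ieval v χ)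
  | .imp φ χ => gimp (ieval v φ) (ieval v χ)
  | .coimp φ χ => gcoimp (ieval v φ) (ieval v χ)
  | .wneg φ => gneg (ieval v φ)
  | .delta φ => gdelta (ieval v φ)
  | .inv φ => 1 - ieval v φ

def valOK (v : ℕ → ℝ) : Prop := ∀ n, v n ∈ Set.Icc (0:ℝ) 1

/-- A (lattice) filter on `[0,1]`. -/
structure GFilter (D : Set ℝ) : Prop where
  subset : D ⊆ Set.Icc (0:ℝ) 1
  nonempty : D.Nonempty
  proper : D ≠ Set.Icc (0:ℝ) 1
  min_mem : ∀ a ∈ D, ∀ b ∈ D, min a b ∈ D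
  upward : ∀ a ∈ D, ∀ b ∈ Set.Icc (0:ℝ) 1, a ≤ b → b ∈ D

/-- Infimum of premise values (`1` for the empty set). -/
noncomputable def infVal (v : ℕ → ℝ) (Γ : Set IForm) : ℝ :=
  sInf (insert 1 (ieval v '' Γ))

/-- Entailment induced by a set `D` of designated values. -/
def entD (D : Set ℝ) (Γ : Set IForm) (χ : IForm) : Prop :=
  ∀ v : ℕ → ℝ, valOK v → infVal v Γ ∈ D → ieval v χ ∈ D

/-- Order-entailment. -/
def entLe (Γ : Set IForm) (χ : IForm) : Prop :=
  ∀ v : ℕ → ℝ, valOK v → infVal v Γ ≤ ieval v χ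

/-- Variables occurring in a `G_inv` formula. -/
def varsOf : IForm → Set ℕ
  | .var n => {n}
  | .bot => ∅
  | .top => ∅
  | .and φ χ => varsOf φ ∪ varsOf χ
  | .or φ χ => varsOf φ ∪ varsOf χ
  | .imp φ χ => varsOf φ ∪ varsOf χ
  | .coimp φ χ => varsOf φ ∪ varsOf χ
  | .wneg φ => varsOf φ
  | .delta φ => varsOf φ
  | .inv φ => varsOf φ


/-! ### Auxiliary lemmas -/

lemma ieval_mem {v : ℕ → ℝ} (hv : valOK v) : ∀ φ, ieval v φ ∈ Set.Icc (0:ℝ) 1 := by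
  intro φ
  induction φ with
  | var n => exact hv n
  | bot => exact ⟨le_refl _, by simp [ieval]⟩
  | top => exact ⟨by simp [ieval], le_refl _⟩
  | and φ χ ih1 ih2 => exact ⟨le_min ih1.1 ih2.1, min_le_of_left_le ih1.2⟩
  | or φ χ ih1 ih2 => exact ⟨le_max_of_le_left ih1.1, max_le ih1.2 ih2.2⟩
  | imp φ χ ih1 ih2 => by_cases h : ieval v φ ≤ ieval v χ <;> simp [ieval, gimp, h] <;> exact ⟨ih2.1, ih2.2⟩
  | coimp φ χ ih1 ih2 => by_cases h : ieval v φ ≤ ieval v χ <;> simp [ieval, gcoimp, h] <;> exact ⟨ih1.1, ih1.2⟩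
  | wneg φ ih => by_cases h : ieval v φ = 0 <;> simp [ieval, gneg, h]
  | delta φ ih => by_cases h : ieval v φ = 1 <;> simp [ieval, gdelta, h]
  | inv φ ih => exact ⟨by simp [ieval]; linarith [ih.2], by simp [ieval]; linarith [ih.1]⟩

lemma ieval_update (v : ℕ → ℝ) (c : ℝ) (n : ℕ) :
    ∀ φ, n ∉ varsOf φ → ieval (Function.update v n c) φ = ieval v φ := by
  intro φ
  induction φ with
  | var m => intro h; simp only [varsOf, Set.mem_singleton_iff] at h
             simp [ieval, Function.update_of_ne (fun hh => h hh.symm)]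
  | bot => intro _; rfl
  | top => intro _; rfl
  | and φ χ ih1 ih2 => intro h; simp only [varsOf, Set.mem_union] at h
                       simp [ieval, ih1 (fun hh => h (Or.inl hh)), ih2 (fun hh => h (Or.inr hh))]
  | or φ χ ih1 ih2 => intro h; simp only [varsOf, Set.mem_union] at h
                      simp [ieval, ih1 (fun hh => h (Or.inl hh)), ih2 (fun hh => h (Or.inr hh))]
  | imp φ χ ih1 ih2 => intro h; simp only [varsOf, Set.mem_union] at h
                       simp [ieval, ih1 (fun hh => h (Or.inl hh)), ih2 (fun hh => h (Or.inr hh))]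
  | coimp φ χ ih1 ih2 => intro h; simp only [varsOf, Set.mem_union] at h
                         simp [ieval, ih1 (fun hh => h (Or.inl hh)), ih2 (fun hh => h (Or.inr hh))]
  | wneg φ ih => intro h; simp [ieval, ih h]
  | delta φ ih => intro h; simp [ieval, ih h]
  | inv φ ih => intro h; simp [ieval, ih h]

lemma ieval_hom {σ : ℝ → ℝ} (hsm : StrictMono σ) (h0 : σ 0 = 0) (h1 : σ 1 = 1)
    (hsym : ∀ x, σ (1 - x) = 1 - σ x) (v : ℕ → ℝ) :
    ∀ φ, ieval (σ ∘ v) φ = σ (ieval v φ) := by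
  intro φ
  induction φ with
  | var m => rfl
  | bot => exact h0.symm
  | top => exact h1.symm
  | and φ χ ih1 ih2 => simp [ieval, ih1, ih2, hsm.monotone.map_min]
  | or φ χ ih1 ih2 => simp [ieval, ih1, ih2, hsm.monotone.map_max]
  | imp φ χ ih1 ih2 =>
      simp only [ieval, ih1, ih2, gimp]
      by_cases h : ieval v φ ≤ ieval v χ
      · rw [if_pos h, if_pos ((hsm.le_iff_le).2 h), h1]
      · rw [if_neg h, if_neg (fun hh => h ((hsm.le_iff_le).1 hh))]
  | coimp φ χ ih1 ih2 =>
      simp only [ieval, ih1, ih2, gcoimp]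
      by_cases h : ieval v φ ≤ ieval v χ
      · rw [if_pos h, if_pos ((hsm.le_iff_le).2 h), h0]
      · rw [if_neg h, if_neg (fun hh => h ((hsm.le_iff_le).1 hh))]
  | wneg φ ih =>
      simp only [ieval, ih, gneg]
      by_cases h : ieval v φ = 0
      · rw [if_pos h, if_pos (by rw [h, h0]), h1]
      · rw [if_neg h, if_neg (fun hh => h (hsm.injective (by rw [hh, h0]))), h0]
  | delta φ ih =>
      simp only [ieval, ih, gdelta]
      by_cases h : ieval v φ = 1
      · rw [if_pos h, if_pos (by rw [h, h1]), h1]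
      · rw [if_neg h, if_neg (fun hh => h (hsm.injective (by rw [hh, h1]))), h0]
  | inv φ ih => simp only [ieval, ih]; exact (hsym _).symm

/-! ### The rescaling automorphism -/

noncomputable def sig (t y x : ℝ) : ℝ :=
  if x ≤ t then (y/t)*x else if x < 1-t then y + ((1-2*y)/(1-2*t))*(x-t) else 1 - (y/t)*(1-x)

section sigprops
variable {t y : ℝ} (ht0 : 0 < t) (ht : t < 1/2) (hy0 : 0 < y) (hy : y < 1/2)

lemma sig_eq1 {x : ℝ} (hx : x ≤ t) : sig t y x = (y/t)*x := if_pos hx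

lemma sig_eq2 {x : ℝ} (hx1 : t < x) (hx2 : x < 1-t) :
    sig t y x = y + ((1-2*y)/(1-2*t))*(x-t) := by
  rw [sig, if_neg (not_le.2 hx1), if_pos hx2]

lemma sig_eq3 {x : ℝ} (ht' : t < 1/2) (hx : 1-t ≤ x) : sig t y x = 1 - (y/t)*(1-x) := by
  rw [sig, if_neg (by linarith), if_neg (not_lt.2 hx)]

include ht0 ht hy0 hy

set_option linter.unusedSectionVars false

lemma sig_zero : sig t y 0 = 0 := by rw [sig_eq1 ht0.le, mul_zero]

lemma sig_one : sig t y 1 = 1 := by rw [sig_eq3 ht (by linarith)]; ring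

lemma sig_t : sig t y t = y := by
  rw [sig_eq1 le_rfl, div_mul_cancel₀ _ ht0.ne']

lemma sig_strictMono : StrictMono (sig t y) := by
  have hat : (y/t) * t = y := div_mul_cancel₀ _ ht0.ne'
  have hbt : ((1-2*y)/(1-2*t)) * (1-2*t) = 1-2*y := div_mul_cancel₀ _ (by linarith)
  have ha : 0 < y/t := div_pos hy0 ht0
  have hb : 0 < (1-2*y)/(1-2*t) := div_pos (by linarith) (by linarith)
  intro x x' h
  rcases le_or_gt x t with hx1 | hx1
  · rcases le_or_gt x' t with hx'1 | hx'1
    · rw [sig_eq1 hx1, sig_eq1 hx'1]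
      exact mul_lt_mul_of_pos_left h ha
    · have hv1 : (y/t)*x ≤ y := by
        calc (y/t)*x ≤ (y/t)*t := mul_le_mul_of_nonneg_left hx1 ha.le
        _ = y := hat
      rcases lt_or_ge x' (1-t) with hx'2 | hx'2
      · rw [sig_eq1 hx1, sig_eq2 hx'1 hx'2]
        nlinarith [mul_pos hb (show (0:ℝ) < x'-t by linarith)]
      · rw [sig_eq1 hx1, sig_eq3 ht hx'2]
        have : (y/t)*(1-x') ≤ (y/t)*t := mul_le_mul_of_nonneg_left (by linarith) ha.le
        nlinarith
  · rcases lt_or_ge x (1-t) with hx2 | hx2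
    · rcases lt_or_ge x' (1-t) with hx'2 | hx'2
      · rw [sig_eq2 hx1 hx2, sig_eq2 (lt_trans hx1 h) hx'2]
        nlinarith [mul_lt_mul_of_pos_left h hb]
      · rw [sig_eq2 hx1 hx2, sig_eq3 ht hx'2]
        have h1 : ((1-2*y)/(1-2*t))*(x-t) < ((1-2*y)/(1-2*t))*(1-2*t) :=
          mul_lt_mul_of_pos_left (by linarith) hb
        have h2 : (y/t)*(1-x') ≤ (y/t)*t := mul_le_mul_of_nonneg_left (by linarith) ha.le
        nlinarith
    · rw [sig_eq3 ht hx2, sig_eq3 ht (by linarith)]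
      have : (y/t)*(1-x') < (y/t)*(1-x) := mul_lt_mul_of_pos_left (by linarith) ha
      linarith

lemma sig_symm : ∀ x, sig t y (1-x) = 1 - sig t y x := by
  intro x
  have hbt : ((1-2*y)/(1-2*t)) * (1-2*t) = 1-2*y := div_mul_cancel₀ _ (by linarith)
  rcases le_or_gt x t with hx1 | hx1
  · rw [sig_eq1 hx1, sig_eq3 ht (by linarith)]; ring
  · rcases lt_or_ge x (1-t) with hx2 | hx2
    · rw [sig_eq2 hx1 hx2, sig_eq2 (by linarith) (by linarith)]
      have : ((1-2*y)/(1-2*t))*((1-x)-t) + ((1-2*y)/(1-2*t))*(x-t)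
           = ((1-2*y)/(1-2*t))*(1-2*t) := by ring
      linarith
    · rw [sig_eq3 ht hx2, sig_eq1 (by linarith)]; ring

lemma sig_mem {x : ℝ} (hx : x ∈ Set.Icc (0:ℝ) 1) : sig t y x ∈ Set.Icc (0:ℝ) 1 := by
  constructor
  · rw [← sig_zero ht0 ht hy0 hy]
    exact (sig_strictMono ht0 ht hy0 hy).monotone hx.1
  · rw [← sig_one ht0 ht hy0 hy]
    exact (sig_strictMono ht0 ht hy0 hy).monotone hx.2

end sigprops

/-! ### infVal lemmas -/

lemma infVal_lb {v : ℕ → ℝ} (hv : valOK v) (Γ : Set IForm) :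
    ∀ a ∈ insert 1 (ieval v '' Γ), (0:ℝ) ≤ a := by
  rintro a (rfl | ⟨φ, _, rfl⟩)
  · norm_num
  · exact (ieval_mem hv φ).1

lemma infVal_le {v : ℕ → ℝ} (hv : valOK v) {Γ : Set IForm} {φ : IForm} (hφ : φ ∈ Γ) :
    infVal v Γ ≤ ieval v φ :=
  csInf_le ⟨0, infVal_lb hv Γ⟩ (Set.mem_insert_of_mem _ ⟨φ, hφ, rfl⟩)

lemma infVal_le_one {v : ℕ → ℝ} (hv : valOK v) (Γ : Set IForm) : infVal v Γ ≤ 1 :=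
  csInf_le ⟨0, infVal_lb hv Γ⟩ (Set.mem_insert _ _)

lemma le_infVal {v : ℕ → ℝ} {Γ : Set IForm} {c : ℝ} (h1 : c ≤ 1)
    (h : ∀ φ ∈ Γ, c ≤ ieval v φ) : c ≤ infVal v Γ := by
  apply le_csInf ⟨1, Set.mem_insert _ _⟩
  rintro a (rfl | ⟨φ, hφ, rfl⟩)
  · exact h1
  · exact h φ hφ

lemma gdelta_01 (x : ℝ) : gdelta x = 0 ∨ gdelta x = 1 := by
  unfold gdelta; split_ifs <;> simp

lemma gneg_01 (x : ℝ) : gneg x = 0 ∨ gneg x = 1 := by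
  unfold gneg; split_ifs <;> simp

/-- For `0 < y < 1/2` and a fresh variable `p`, the entailment in `G_inv` induced
by the filter `[y,1]` reduces to the order-entailment:
`Γ ⊨^{[y,1]} χ` iff `Γ^{↓!} ⊨^≤ Δ(p → χ)`, where
`Γ^{↓!} = {Δ(p → φ) : φ ∈ Γ} ∪ {∼Δ(∼ᵢp → p)}`. -/
theorem reduction_Icc_y_one_to_order :
    ∀ y : ℝ, 0 < y → y < 1/2 →
      ∀ (Γ : Set IForm) (χ : IForm) (n : ℕ),
        n ∉ varsOf χ → (∀ φ ∈ Γ, n ∉ varsOf φ) →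
        (entD (Set.Icc y 1) Γ χ ↔
          entLe ((fun φ => IForm.delta (.imp (.var n) φ)) '' Γ ∪
              {IForm.wneg (.delta (.imp (.inv (.var n)) (.var n)))})
            (IForm.delta (.imp (.var n) χ))) := by
  intro y hy0 hy Γ χ n hnχ hnΓ
  constructor
  · -- entD → entLe
    intro hD v hv
    set Γ' : Set IForm := (fun φ => IForm.delta (.imp (.var n) φ)) '' Γ ∪
        {IForm.wneg (.delta (.imp (.inv (.var n)) (.var n)))} with hΓ'
    by_cases hone : ∀ a ∈ insert 1 (ieval v '' Γ'), a = (1:ℝ)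
    · -- every premise evaluates to 1
      have hw : ieval v (IForm.wneg (.delta (.imp (.inv (.var n)) (.var n)))) = 1 := by
        apply hone
        exact Set.mem_insert_of_mem _ ⟨_, Set.mem_union_right _ rfl, rfl⟩
      have hvn2 : v n < 1/2 := by
        by_contra hcon
        push_neg at hcon
        have hgi : gimp (1 - v n) (v n) = 1 := if_pos (by linarith)
        simp only [ieval, hgi] at hw
        rw [gdelta, if_pos rfl, gneg, if_neg (by norm_num)] at hw
        norm_num at hw
      have hΓle : ∀ φ ∈ Γ, v n ≤ ieval v φ := by
        intro φ hφ
        have h1 : ieval v (IForm.delta (.imp (.var n) φ)) = 1 := by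
          apply hone
          exact Set.mem_insert_of_mem _ ⟨_, Set.mem_union_left _ ⟨φ, hφ, rfl⟩, rfl⟩
        simp only [ieval] at h1
        by_cases h : v n ≤ ieval v φ
        · exact h
        · exfalso
          rw [gimp, if_neg h, gdelta] at h1
          split_ifs at h1 with h2
          · exact h (h2 ▸ (hv n).2)
          · norm_num at h1
      have hmain : v n ≤ ieval v χ := by
        rcases le_or_gt (v n) 0 with h0 | h0
        · exact le_trans h0 (ieval_mem hv χ).1
        · set σ := sig (v n) y with hσ
          have hsm := sig_strictMono h0 hvn2 hy0 hy
          have hs0 := sig_zero h0 hvn2 hy0 hy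
          have hs1 := sig_one h0 hvn2 hy0 hy
          have hst := sig_t h0 hvn2 hy0 hy
          have hsym := sig_symm h0 hvn2 hy0 hy
          have hwv : valOK (σ ∘ v) := fun m => sig_mem h0 hvn2 hy0 hy (hv m)
          have hin : infVal (σ ∘ v) Γ ∈ Set.Icc y 1 := by
            constructor
            · apply le_infVal (by linarith)
              intro φ hφ
              rw [ieval_hom hsm hs0 hs1 hsym]
              exact le_trans (le_of_eq hst.symm) (hsm.monotone (hΓle φ hφ))
            · exact infVal_le_one hwv Γ
          have hgoal := hD (σ ∘ v) hwv hin
          rw [ieval_hom hsm hs0 hs1 hsym] at hgoal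
          have h' : σ (v n) ≤ σ (ieval v χ) := by rw [hσ, hst]; exact hgoal.1
          exact hsm.le_iff_le.1 h'
      have hfin : ieval v (IForm.delta (.imp (.var n) χ)) = 1 := by
        simp only [ieval]
        rw [gimp, if_pos hmain, gdelta, if_pos rfl]
      rw [hfin]
      exact infVal_le_one hv Γ'
    · -- some premise evaluates to 0
      push_neg at hone
      obtain ⟨a, ha, hane⟩ := hone
      have ha0 : a = 0 := by
        rcases ha with rfl | ⟨ψ, hψ, rfl⟩
        · exact absurd rfl hane
        · rcases hψ with ⟨φ, hφ, rfl⟩ | rfl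
          · simp only [ieval] at hane ⊢
            exact (gdelta_01 _).resolve_right hane
          · simp only [ieval] at hane ⊢
            exact (gneg_01 _).resolve_right hane
      have h1 : infVal v Γ' ≤ 0 := ha0 ▸ csInf_le ⟨0, infVal_lb hv Γ'⟩ ha
      have h2 : (0:ℝ) ≤ ieval v (IForm.delta (.imp (.var n) χ)) := (ieval_mem hv _).1
      exact le_trans h1 h2
  · -- entLe → entD
    intro hLe v hv hmem
    set v' := Function.update v n y with hv'def
    have hv' : valOK v' := by
      intro m
      rcases eq_or_ne m n with rfl | hne
      · rw [hv'def]
        simp only [Function.update_self]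
        exact ⟨hy0.le, by linarith⟩
      · rw [hv'def]
        simpa [Function.update_of_ne hne] using hv m
    have hvn : v' n = y := Function.update_self n y v
    have hkey : (1:ℝ) ≤ infVal v' ((fun φ => IForm.delta (.imp (.var n) φ)) '' Γ ∪
        {IForm.wneg (.delta (.imp (.inv (.var n)) (.var n)))}) := by
      apply le_infVal le_rfl
      rintro ψ (⟨φ, hφ, rfl⟩ | rfl)
      · have hφy : y ≤ ieval v' φ := by
          rw [hv'def, ieval_update v y n φ (hnΓ φ hφ)]
          exact le_trans hmem.1 (infVal_le hv hφ)
        simp only [ieval, hvn]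
        rw [gimp, if_pos hφy, gdelta, if_pos rfl]
      · simp only [ieval, hvn]
        rw [gimp, if_neg (by intro h; linarith), gdelta,
            if_neg (ne_of_lt (by linarith)), gneg, if_pos rfl]
    have hfin := le_trans hkey (hLe v' hv')
    simp only [ieval, hvn] at hfin
    rw [hv'def, ieval_update v y n χ hnχ] at hfin
    have h1 : gimp y (ieval v χ) = 1 := by
      by_contra hcon
      rw [gdelta, if_neg hcon] at hfin; norm_num at hfin
    have h2 : y ≤ ieval v χ := by
      rw [gimp] at h1
      split_ifs at h1 with h
      · exact h
      · rw [h1]; linarith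
    exact ⟨h2, (ieval_mem hv χ).2⟩
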